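/- Let G be a compact topological group and η : G*X → X a continuous topological partial action with G*X closed in G × X. If X is Hausdorff (respectively regular, respectively second countable, respectively metrizable), then the orbit space X/∼_G is Hausdorff (respectively regular, respectively second countable, respectively metrizable). -/

import Mathlib

/-!
The quotient map `π : X → X/∼_G` is open, because the saturation of `U` is the union of the open
sets `η_g(U ∩ X_{g⁻¹})`, and closed, because the saturation of a closed `F` is the projection along
the compact factor `G` of the closed set `{(g, x) ∈ G*X | η_g x ∈ F}`. Its fibres, the orbits, are
continuous images of closed subsets of `G`, hence compact. A proper open surjection `π` makes
`y ↦ π⁻¹{y}` an embedding of the orbit space into the nonempty compact subsets of `X` with the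
Vietoris topology, and this hyperspace inherits each of the four properties from `X`.
-/

open Set

structure PartialAction (G : Type*) (X : Type*) [Group G] where
  D : G → Set X
  act : G → X → X
  D_one : D 1 = Set.univ
  act_one : ∀ x, act 1 x = x
  bijOn : ∀ g : G, Set.BijOn (act g) (D g⁻¹) (D g)
  image_inter : ∀ g h : G, act g '' (D g⁻¹ ∩ D h) = D g ∩ D (g * h)
  comp : ∀ g h : G, ∀ x ∈ D h⁻¹ ∩ D (h⁻¹ * g⁻¹), act g (act h x) = act (g * h) x

/-- The domain `G*X = {(g,x) : x ∈ X_{g⁻¹}}` of a partial action. -/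
def PartialAction.domSet {G X : Type*} [Group G] (pa : PartialAction G X) : Set (G × X) :=
  {p : G × X | p.2 ∈ pa.D p.1⁻¹}

/-- The relation `R` on `G × X`: `(g,x) R (h,y)` iff `x ∈ X_{g⁻¹h}` and `η_{h⁻¹g}(x) = y`. -/
def PartialAction.envRel {G X : Type*} [Group G] (pa : PartialAction G X) :
    G × X → G × X → Prop :=
  fun p q => p.2 ∈ pa.D (p.1⁻¹ * q.1) ∧ pa.act (q.1⁻¹ * p.1) p.2 = q.2

/-- The orbit equivalence relation of a partial action. -/
def PartialAction.orbitRel {G X : Type*} [Group G] (pa : PartialAction G X) : X → X → Prop :=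
  fun x y => ∃ g : G, x ∈ pa.D g⁻¹ ∧ pa.act g x = y

/-- A topological partial action: open domains, each `η_g` a homeomorphism onto its image. -/
structure TopPartialAction (G : Type*) (X : Type*) [Group G] [TopologicalSpace G]
    [TopologicalSpace X] extends PartialAction G X where
  isOpen_D : ∀ g : G, IsOpen (D g)
  continuousOn_act : ∀ g : G, ContinuousOn (act g) (D g⁻¹)

/-- A continuous topological partial action: the evaluation map on `G*X` is continuous. -/
structure ContPartialAction (G : Type*) (X : Type*) [Group G] [TopologicalSpace G]
    [TopologicalSpace X] extends TopPartialAction G X where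
  continuousOn_eval :
    ContinuousOn (fun p : G × X => act p.1 p.2) {p : G × X | p.2 ∈ D p.1⁻¹}

open Function Topology TopologicalSpace

section ProperMap

variable {X Y : Type*} [TopologicalSpace X] [TopologicalSpace Y] {π : X → Y}

def IsProperMap.fiberNonemptyCompacts (hπ : IsProperMap π) (hsurj : Surjective π) (y : Y) :
    NonemptyCompacts X :=
  ⟨⟨π ⁻¹' {y}, hπ.isCompact_preimage isCompact_singleton⟩, hsurj y⟩

attribute [local instance] TopologicalSpace.vietoris in
theorem IsProperMap.continuous_fiberNonemptyCompacts (hπ : IsProperMap π)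
    (hsurj : Surjective π) (hopen : IsOpenMap π) :
    Continuous (hπ.fiberNonemptyCompacts hsurj) := by
  rw [NonemptyCompacts.isEmbedding_coe.continuous_iff, vietoris.continuous_iff]
  exact ⟨fun _ hU => isClosedMap_iff_kernImage.1 hπ.isClosedMap hU,
    fun _ hF => isOpenMap_iff_kernImage.1 hopen hF⟩

theorem IsProperMap.isEmbedding_fiberNonemptyCompacts (hπ : IsProperMap π)
    (hsurj : Surjective π) (hopen : IsOpenMap π) :
    IsEmbedding (hπ.fiberNonemptyCompacts hsurj) := by
  refine ⟨⟨le_antisymm (hπ.continuous_fiberNonemptyCompacts hsurj hopen).le_induced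
    fun V hV => ⟨_, NonemptyCompacts.isOpen_subsets_of_isOpen (hV.preimage hπ.continuous), ?_⟩⟩,
    fun y y' h => ?_⟩
  · exact kernImage_preimage_eq_iff.2 (by simp [hsurj.range_eq])
  · exact singleton_injective (hsurj.preimage_injective congr(($h : Set X)))

instance [MetrizableSpace X] : MetrizableSpace (NonemptyCompacts X) :=
  letI := metrizableSpaceMetric X
  inferInstance

end ProperMap

namespace PartialAction

variable {G X : Type*} [Group G] (pa : PartialAction G X)

theorem mem_D_one (x : X) : x ∈ pa.D 1 := pa.D_one ▸ mem_univ x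

theorem act_mem_D {g : G} {x : X} (hx : x ∈ pa.D g⁻¹) : pa.act g x ∈ pa.D g :=
  (pa.bijOn g).mapsTo hx

theorem act_inv_act {g : G} {x : X} (hx : x ∈ pa.D g⁻¹) : pa.act g⁻¹ (pa.act g x) = x := by
  have := pa.comp g⁻¹ g x ⟨hx, by simpa using pa.mem_D_one x⟩
  rwa [inv_mul_cancel, pa.act_one] at this

theorem mem_D_mul_inv {g h : G} {x : X} (hx : x ∈ pa.D g⁻¹) (hgx : pa.act g x ∈ pa.D h⁻¹) :
    x ∈ pa.D (h * g)⁻¹ := by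
  have hmem : pa.act g⁻¹ (pa.act g x) ∈ pa.D g⁻¹ ∩ pa.D (g⁻¹ * h⁻¹) := by
    rw [← pa.image_inter]
    exact mem_image_of_mem _ ⟨by simpa using pa.act_mem_D hx, hgx⟩
  rw [pa.act_inv_act hx] at hmem
  simpa using hmem.2

theorem act_mul {g h : G} {x : X} (hx : x ∈ pa.D g⁻¹) (hgx : pa.act g x ∈ pa.D h⁻¹) :
    pa.act h (pa.act g x) = pa.act (h * g) x :=
  pa.comp h g x ⟨hx, by simpa using pa.mem_D_mul_inv hx hgx⟩

theorem orbitRel_equivalence : Equivalence pa.orbitRel where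
  refl x := ⟨1, by simpa using pa.mem_D_one x, pa.act_one x⟩
  symm := by
    rintro x _ ⟨g, hx, rfl⟩
    exact ⟨g⁻¹, by simpa using pa.act_mem_D hx, pa.act_inv_act hx⟩
  trans := by
    rintro x _ _ ⟨g, hx, rfl⟩ ⟨h, hgx, rfl⟩
    exact ⟨h * g, pa.mem_D_mul_inv hx hgx, (pa.act_mul hx hgx).symm⟩

theorem mk_eq_mk_iff {x y : X} : Quot.mk pa.orbitRel x = Quot.mk pa.orbitRel y ↔ pa.orbitRel x y :=
  pa.orbitRel_equivalence.quot_mk_eq_iff x y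

theorem preimage_image_mk_eq_iUnion (S : Set X) :
    Quot.mk pa.orbitRel ⁻¹' (Quot.mk pa.orbitRel '' S) = ⋃ g, pa.act g '' (S ∩ pa.D g⁻¹) := by
  ext y
  simp only [mem_preimage, mem_image, pa.mk_eq_mk_iff, orbitRel, mem_iUnion, mem_inter_iff]
  grind

theorem preimage_image_mk_eq_image_snd (S : Set X) :
    Quot.mk pa.orbitRel ⁻¹' (Quot.mk pa.orbitRel '' S) =
      Prod.snd '' (pa.domSet ∩ (fun p : G × X => pa.act p.1 p.2) ⁻¹' S) := by
  ext y
  simp only [mem_preimage, mem_image, pa.mk_eq_mk_iff]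
  constructor
  · rintro ⟨x, hx, hxy⟩
    obtain ⟨g, hy, rfl⟩ := pa.orbitRel_equivalence.symm hxy
    exact ⟨(g, y), ⟨hy, hx⟩, rfl⟩
  · rintro ⟨⟨g, y⟩, ⟨hy, hx⟩, rfl⟩
    exact ⟨_, hx, pa.orbitRel_equivalence.symm ⟨g, hy, rfl⟩⟩

theorem preimage_mk_singleton (x : X) :
    Quot.mk pa.orbitRel ⁻¹' {Quot.mk pa.orbitRel x} =
      (fun g => pa.act g x) '' {g | x ∈ pa.D g⁻¹} := by
  ext y
  simp only [mem_preimage, mem_singleton_iff, mem_image, mem_ofPred_eq]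
  rw [eq_comm, pa.mk_eq_mk_iff]
  rfl

end PartialAction

namespace TopPartialAction

variable {G X : Type*} [Group G] [TopologicalSpace G] [TopologicalSpace X]
  (pa : TopPartialAction G X)

def toOpenPartialHomeomorph (g : G) : OpenPartialHomeomorph X X where
  toFun := pa.act g
  invFun := pa.act g⁻¹
  source := pa.D g⁻¹
  target := pa.D g
  map_source' _ hx := pa.act_mem_D hx
  map_target' _ hx := by simpa using pa.act_mem_D (g := g⁻¹) (by simpa using hx)
  left_inv' _ hx := pa.act_inv_act hx
  right_inv' x hx := by simpa using pa.act_inv_act (g := g⁻¹) (by simpa using hx)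
  open_source := pa.isOpen_D g⁻¹
  open_target := pa.isOpen_D g
  continuousOn_toFun := pa.continuousOn_act g
  continuousOn_invFun := by simpa using pa.continuousOn_act g⁻¹

theorem isOpenMap_mk : IsOpenMap (Quot.mk pa.orbitRel) := fun S hS => by
  rw [← isQuotientMap_quot_mk.isOpen_preimage, pa.preimage_image_mk_eq_iUnion]
  exact isOpen_iUnion fun g => (pa.toOpenPartialHomeomorph g).isOpen_image_of_subset_source
    (hS.inter (pa.isOpen_D g⁻¹)) inter_subset_right

end TopPartialAction

namespace ContPartialAction

variable {G X : Type*} [Group G] [TopologicalSpace G] [TopologicalSpace X] [CompactSpace G]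
  (pa : ContPartialAction G X)

theorem isClosedMap_mk (hclosed : IsClosed pa.domSet) : IsClosedMap (Quot.mk pa.orbitRel) :=
  fun S hS => by
    rw [← isQuotientMap_quot_mk.isClosed_preimage, pa.preimage_image_mk_eq_image_snd]
    exact isClosedMap_snd_of_compactSpace _
      (pa.continuousOn_eval.preimage_isClosed_of_isClosed hclosed hS)

theorem isCompact_preimage_mk_singleton (hclosed : IsClosed pa.domSet) (x : X) :
    IsCompact (Quot.mk pa.orbitRel ⁻¹' {Quot.mk pa.orbitRel x}) := by
  rw [pa.preimage_mk_singleton]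
  have hcont : Continuous fun g : G => (g, x) := by fun_prop
  exact (hclosed.preimage hcont).isCompact.image_of_continuousOn
    (pa.continuousOn_eval.comp hcont.continuousOn fun _ hg => hg)

theorem isProperMap_mk (hclosed : IsClosed pa.domSet) : IsProperMap (Quot.mk pa.orbitRel) :=
  isProperMap_iff_isClosedMap_and_compact_fibers.2 ⟨continuous_quot_mk, pa.isClosedMap_mk hclosed,
    Quot.ind (pa.isCompact_preimage_mk_singleton hclosed)⟩

end ContPartialAction

/-- If `G` is compact and `G*X` closed, the orbit space inherits Hausdorffness,
regularity, second countability and metrizability from `X`. -/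
theorem statement13 {G X : Type*} [Group G] [TopologicalSpace G] [TopologicalSpace X]
    [CompactSpace G] (pa : ContPartialAction G X)
    (hclosed : IsClosed pa.domSet) :
    (T2Space X → T2Space (Quot pa.orbitRel)) ∧
    (RegularSpace X → RegularSpace (Quot pa.orbitRel)) ∧
    (SecondCountableTopology X → SecondCountableTopology (Quot pa.orbitRel)) ∧
    (TopologicalSpace.MetrizableSpace X →
      TopologicalSpace.MetrizableSpace (Quot pa.orbitRel)) := by
  have hemb := (pa.isProperMap_mk hclosed).isEmbedding_fiberNonemptyCompacts Quot.mk_surjective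
    pa.isOpenMap_mk
  exact ⟨fun _ => hemb.t2Space, fun _ => hemb.isInducing.regularSpace,
    fun _ => hemb.isInducing.secondCountableTopology,
    fun _ => hemb.metrizableSpace⟩
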